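/- Let F be an antinef divisor with valuation vector f ∈ ℤ^N and set ξ_F := min_ν λ(f_ν,ν). Then the support {ν ∈ Γ : λ(f_ν,ν) = ξ_F} of the jumping number ξ_F with respect to F contains a vertex ν which is either a star (v_Γ(ν) ≥ 3) or satisfies d̂_ν > 0 (i.e. corresponds to a simple factor of the ideal). -/

import Mathlib

open Matrix BigOperators

open scoped Classical

noncomputable section

/-- Proximity data of a dual graph on vertex set `Fin N`, built from a single
root vertex by a finite sequence of elementary modifications. Vertices are
ordered by creation; each new vertex is proximate to at most two existing
(earlier) vertices, which must be adjacent to each other at that time if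
there are two of them. -/
structure DualGraph where
  N : ℕ
  Npos : 0 < N
  prox : Fin N → Fin N → Prop
  prox_lt : ∀ {μ ν}, prox μ ν → ν < μ
  prox_card : ∀ μ, {ν | prox μ ν}.ncard ≤ 2
  prox_nonempty : ∀ μ : Fin N, 0 < (μ : ℕ) → ∃ ν, prox μ ν
  prox_pair : ∀ {μ a b}, prox μ a → prox μ b → a ≠ b →
      (prox a b ∨ prox b a) ∧ ∀ ρ, ρ < μ → ¬(prox ρ a ∧ prox ρ b)

namespace DualGraph

variable (G : DualGraph)

/-- The proximity matrix `P`. -/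
def P : Matrix (Fin G.N) (Fin G.N) ℚ :=
  fun μ ν => if μ = ν then 1 else if G.prox μ ν then -1 else 0

/-- `Q = P⁻¹`. -/
def Q : Matrix (Fin G.N) (Fin G.N) ℚ := (G.P)⁻¹

/-- The valuation matrix `V = (PᵀP)⁻¹`. -/
def V : Matrix (Fin G.N) (Fin G.N) ℚ := (G.Pᵀ * G.P)⁻¹

/-- Adjacency in the dual graph: `μ ∼ ν` iff `(PᵀP)_{μν} = -1`. -/
def adj (μ ν : Fin G.N) : Prop := μ ≠ ν ∧ (G.Pᵀ * G.P) μ ν = -1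

lemma adj_symm {μ ν : Fin G.N} (h : G.adj μ ν) : G.adj ν μ := by
  obtain ⟨hne, h2⟩ := h
  refine ⟨hne.symm, ?_⟩
  have ht : (G.Pᵀ * G.P)ᵀ = G.Pᵀ * G.P := by
    rw [Matrix.transpose_mul, Matrix.transpose_transpose]
  calc (G.Pᵀ * G.P) ν μ = (G.Pᵀ * G.P)ᵀ μ ν := rfl
    _ = (G.Pᵀ * G.P) μ ν := by rw [ht]
    _ = -1 := h2

/-- The dual graph as a simple graph. -/
def graph : SimpleGraph (Fin G.N) where
  Adj := G.adj
  symm := ⟨fun _ _ h => G.adj_symm h⟩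
  loopless := ⟨fun μ h => h.1 rfl⟩

/-- The graph distance `d(μ,ν)`. -/
def dist (μ ν : Fin G.N) : ℕ := G.graph.dist μ ν

/-- The set of vertices on the unique path `[μ,γ]` from `μ` to `γ`. -/
def pathSet (μ γ : Fin G.N) : Finset (Fin G.N) :=
  Finset.univ.filter (fun ν => G.dist μ ν + G.dist ν γ = G.dist μ γ)

/-- The branch `Γ^μ_ν` emanating from `μ` towards `ν`: the maximal connected
subgraph of `Γ` containing `ν` but not `μ` (with `Γ^μ_μ = ∅`). -/
def branch (μ ν : Fin G.N) : Finset (Fin G.N) :=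
  Finset.univ.filter (fun η => ν ≠ μ ∧ η ≠ μ ∧ μ ∉ G.pathSet ν η)

/-- The set of vertices adjacent to `μ`. -/
def nbrs (μ : Fin G.N) : Finset (Fin G.N) := Finset.univ.filter (fun ν => G.adj μ ν)

/-- The valence `v_Γ(μ)`: the number of vertices adjacent to `μ`. -/
def valence (μ : Fin G.N) : ℕ := (G.nbrs μ).card

/-- The weight `w_Γ(μ) = (PᵀP)_{μμ}`. -/
def w (μ : Fin G.N) : ℚ := (G.Pᵀ * G.P) μ μ

/-- The canonical vector `k`, `k_ν = Σ_μ q_{νμ}`. -/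
def kvec : Fin G.N → ℚ := fun ν => ∑ μ, G.Q ν μ

/-- A divisor with valuation vector `f` is antinef iff its factorization
vector `f̂ = f PᵀP` is nonnegative. -/
def Antinef (f : Fin G.N → ℚ) : Prop := ∀ ν, 0 ≤ (f ᵥ* (G.Pᵀ * G.P)) ν

/-- `λ(fE, gE; ν) = (f_ν + k_ν + 1)/g_ν` for divisors with valuation
vectors `f`, `g`. -/
def lamDiv (f g : Fin G.N → ℚ) (ν : Fin G.N) : ℚ := (f ν + G.kvec ν + 1) / g ν

/-- `ρ_{[μ,γ]}(ν) = V_{γν}/V_{μν}`. -/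
def rho (μ γ ν : Fin G.N) : ℚ := G.V γ ν / G.V μ ν

/-- `r̂_{[μ,γ]} = 𝟙_γ − ρ_{[μ,γ]}(μ)·𝟙_μ`. -/
def rhat (μ γ : Fin G.N) : Fin G.N → ℚ :=
  fun j => (if j = γ then 1 else 0) - G.rho μ γ μ * (if j = μ then 1 else 0)

/-- `φ_η^{[μ,γ]}(ν) = (r̂_{[μ,γ]}V)_ν / V_{ην}`. -/
def phi (η μ γ ν : Fin G.N) : ℚ := (G.rhat μ γ ᵥ* G.V) ν / G.V η ν

/-- The transform `f̂_{⟨ĝ⟩[ĥ]}` relative to the vertex `μ`. -/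
def transform (μ : Fin G.N) (fh gh hh : Fin G.N → ℚ) : Fin G.N → ℚ :=
  fh - (∑ i ∈ G.nbrs μ, ∑ j ∈ G.branch μ i, gh j • G.rhat i j)
     + ∑ i ∈ G.nbrs μ, hh i • G.rhat μ i

/-- The transform `f̂^𝒩 = f̂ − Σ_i f̂_i·r̂_{[μ,i]}` relative to the vertex `μ`. -/
def nmap (μ : Fin G.N) (fh : Fin G.N → ℚ) : Fin G.N → ℚ :=
  fh - ∑ i, fh i • G.rhat μ i

/-- A vertex is free if it is proximate to at most one vertex. -/
def Free (μ : Fin G.N) : Prop := {ν | G.prox μ ν}.ncard ≤ 1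

/-- `μ` is infinitely near to `ν` (written `ν ⊂ μ`): the reflexive-transitive
closure of proximity. -/
def InfNear (μ ν : Fin G.N) : Prop := Relation.ReflTransGen G.prox μ ν

/-- The root vertex. -/
def root : Fin G.N := ⟨0, G.Npos⟩

/-- The branch `Γ^μ_ν` is anterior to `μ` if `μ` is infinitely near to some of
its vertices; otherwise it is posterior. -/
def Anterior (μ ν : Fin G.N) : Prop := ∃ η ∈ G.branch μ ν, G.InfNear μ η

/-- The pair `(γ,τ)` associated to `μ`. -/
def PairAssociated (γ τ μ : Fin G.N) : Prop :=
  G.InfNear τ γ ∧ G.InfNear μ τ ∧ G.Free τ ∧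
  (∀ ν, G.Free ν → G.InfNear μ ν → G.InfNear τ ν) ∧
  ((¬ G.Free γ ∧ ∀ ν, ¬ G.Free ν → G.InfNear τ ν → G.InfNear γ ν) ∨
   ((∀ ν, G.InfNear τ ν → G.Free ν) ∧ γ = G.root))

/-- The entries of `V` as natural numbers (they are positive integers). -/
def Vnat (μ ν : Fin G.N) : ℕ := (G.V μ ν).num.toNat

/-- The submonoid `SV^μ_ν` of `ℕ` generated by `{V_{μi} : i ∈ Γ^μ_ν ∪ {μ}}`. -/
def SVb (μ ν : Fin G.N) : AddSubmonoid ℕ :=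
  AddSubmonoid.closure ↑((insert μ (G.branch μ ν)).image (G.Vnat μ))

/-- `s^μ_ν = gcd{V_{μi} : i ∈ Γ^μ_ν ∪ {μ}}`. -/
def sgcd (μ ν : Fin G.N) : ℕ := (insert μ (G.branch μ ν)).gcd (G.Vnat μ)

/-- The submonoid `S^μ` of `ℕ` generated by the `s^μ_ν`, `ν ∈ Γ`. -/
def Ssg (μ : Fin G.N) : AddSubmonoid ℕ :=
  AddSubmonoid.closure (Set.range (fun ν => G.sgcd μ ν))

/-- The valuation vector `d = d̂V` of the ideal with factorization vector `d̂`. -/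
def dval (dh : Fin G.N → ℕ) : Fin G.N → ℚ := (fun i => (dh i : ℚ)) ᵥ* G.V

/-- `λ(a,ν) = (a + k_ν + 1)/d_ν`. -/
def lamA (dh : Fin G.N → ℕ) (a : ℚ) (ν : Fin G.N) : ℚ :=
  (a + G.kvec ν + 1) / G.dval dh ν

/-- The set of jumping numbers of the ideal with factorization vector `d̂`
supported at the vertex `μ`. -/
def Hset (dh : Fin G.N → ℕ) (μ : Fin G.N) : Set ℚ :=
  { ξ | ∃ f : Fin G.N → ℤ, G.Antinef (fun i => (f i : ℚ)) ∧
      (∀ ν, G.lamA dh (f μ : ℚ) μ ≤ G.lamA dh (f ν : ℚ) ν) ∧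
      ξ = G.lamA dh (f μ : ℚ) μ }

end DualGraph
end

/-!
Let `ξ` be the minimum of `λ(f_ν, ν)` and `g := f + k + 1 - ξ d`, so that `g ≥ 0` and the
support of `ξ` is the zero set `S` of `g`. Since `(k + 𝟙) PᵀP = 2 - v_Γ`, we get
`g PᵀP = f̂ + 2 - v_Γ - ξ d̂`. At a vertex `η ∈ S` with `v_Γ(η) ≤ 2` and `d̂_η = 0`,
antinefness of `f` gives `(g PᵀP)_η ≥ 0`, whereas `(g PᵀP)_η = Σ_{ρ ≠ η} g_ρ (PᵀP)_{ρη} ≤ 0`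
because the off-diagonal entries of `PᵀP` are `0` or `-1`; hence every neighbour of `η` lies
in `S`. If no vertex of `S` were a star or had `d̂_η > 0`, then `S` would be closed under
adjacency, `PᵀP` would be block diagonal along `S`, and `𝟙_S · d` would be killed by the
invertible matrix `PᵀP` although `d > 0`.
-/

namespace DualGraph

open Finset

variable (G : DualGraph)

-- In lemma names, `M` stands for `Pᵀ * P`.

lemma prox_irrefl (μ : Fin G.N) : ¬ G.prox μ μ := fun h => lt_irrefl _ (G.prox_lt h)

lemma prox_asymm {μ ν : Fin G.N} (h : G.prox μ ν) : ¬ G.prox ν μ :=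
  fun h' => lt_asymm (G.prox_lt h) (G.prox_lt h')

lemma P_isLowerTriangular : G.P.IsLowerTriangular := by
  intro μ ν (h : μ < ν)
  simp [P, h.ne, show ¬ G.prox μ ν from fun hp => lt_asymm h (G.prox_lt hp)]

lemma det_P : G.P.det = 1 := by
  simp [Matrix.det_of_isLowerTriangular _ G.P_isLowerTriangular, P]

lemma isUnit_det_M : IsUnit (G.Pᵀ * G.P).det := by
  simp [Matrix.det_mul, det_P]

lemma V_eq_Q_mul_transpose : G.V = G.Q * G.Qᵀ := by
  rw [V, Q, Matrix.mul_inv_rev, Matrix.transpose_nonsing_inv]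

lemma Q_eq_add_sum_prox (μ ρ : Fin G.N) :
    G.Q μ ρ = (if μ = ρ then 1 else 0) + ∑ ν ∈ univ.filter (G.prox μ), G.Q ν ρ := by
  have hPQ : G.P * G.Q = 1 := Matrix.mul_nonsing_inv G.P (by simp [det_P])
  replace hPQ := congrFun (congrFun hPQ μ) ρ
  have hterm : ∀ ν, G.P μ ν * G.Q ν ρ
      = (if μ = ν then G.Q ν ρ else 0) - if G.prox μ ν then G.Q ν ρ else 0 := by
    intro ν
    unfold P
    split_ifs <;> simp_all [prox_irrefl]
  rw [Matrix.mul_apply, sum_congr rfl fun ν _ => hterm ν, sum_sub_distrib,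
    sum_ite_eq, ← sum_filter, Matrix.one_apply] at hPQ
  simp only [mem_univ, if_true] at hPQ
  linarith

lemma Q_nonneg (μ ρ : Fin G.N) : 0 ≤ G.Q μ ρ := by
  induction μ using WellFoundedLT.induction with
  | ind μ ih =>
    rw [Q_eq_add_sum_prox]
    exact add_nonneg (by positivity)
      (sum_nonneg fun ν hν => ih ν (G.prox_lt (mem_filter.mp hν).2))

lemma Q_root_pos (μ : Fin G.N) : 0 < G.Q μ G.root := by
  induction μ using WellFoundedLT.induction with
  | ind μ ih =>
    rw [Q_eq_add_sum_prox]
    rcases eq_or_ne μ G.root with rfl | hμ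
    · exact add_pos_of_pos_of_nonneg (by simp) (sum_nonneg fun ν _ => G.Q_nonneg ν _)
    · obtain ⟨ν, hν⟩ := G.prox_nonempty μ (Nat.pos_of_ne_zero fun h => hμ (Fin.ext h))
      exact add_pos_of_nonneg_of_pos (by positivity) (sum_pos'
        (fun ν _ => G.Q_nonneg ν _) ⟨ν, by simpa using hν, ih ν (G.prox_lt hν)⟩)

lemma V_pos (μ ν : Fin G.N) : 0 < G.V μ ν := by
  rw [V_eq_Q_mul_transpose, Matrix.mul_apply]
  exact sum_pos' (fun ρ _ => mul_nonneg (G.Q_nonneg μ ρ) (G.Q_nonneg ν ρ))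
    ⟨G.root, mem_univ _, mul_pos (G.Q_root_pos μ) (G.Q_root_pos ν)⟩

lemma dval_pos {dh : Fin G.N → ℕ} (hdh : dh ≠ 0) (ν : Fin G.N) : 0 < G.dval dh ν := by
  obtain ⟨μ, hμ⟩ := Function.ne_iff.mp hdh
  exact sum_pos' (fun ρ _ => mul_nonneg (by positivity) (G.V_pos ρ ν).le)
    ⟨μ, mem_univ _, mul_pos (by simpa [Nat.pos_iff_ne_zero] using hμ) (G.V_pos μ ν)⟩

lemma dval_vecMul_M (dh : Fin G.N → ℕ) : G.dval dh ᵥ* (G.Pᵀ * G.P) = fun ν => (dh ν : ℚ) := by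
  rw [dval, Matrix.vecMul_vecMul, V, Matrix.nonsing_inv_mul _ G.isUnit_det_M, Matrix.vecMul_one]

lemma M_comm (μ ν : Fin G.N) : (G.Pᵀ * G.P) μ ν = (G.Pᵀ * G.P) ν μ :=
  (Matrix.isSymm_transpose_mul_self G.P).apply ν μ

lemma M_apply_of_ne {μ ν : Fin G.N} (hne : μ ≠ ν) :
    (G.Pᵀ * G.P) μ ν = #{ρ | G.prox ρ μ ∧ G.prox ρ ν}
      - (if G.prox μ ν then 1 else 0) - (if G.prox ν μ then 1 else 0) := by
  have hterm : ∀ ρ, G.P ρ μ * G.P ρ ν = (if G.prox ρ μ ∧ G.prox ρ ν then 1 else 0)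
      - (if ρ = μ ∧ G.prox μ ν then 1 else 0) - (if ρ = ν ∧ G.prox ν μ then 1 else 0) := by
    intro ρ
    unfold P
    split_ifs <;> simp_all [prox_irrefl]
  rw [Matrix.mul_apply]
  simp only [Matrix.transpose_apply, hterm, sum_sub_distrib]
  rw [sum_boole]
  simp [ite_and]

lemma card_commonProx_le_one {μ ν : Fin G.N} (hne : μ ≠ ν) :
    #{ρ | G.prox ρ μ ∧ G.prox ρ ν} ≤ 1 := by
  refine card_le_one.mpr fun a ha b hb => ?_
  simp only [mem_filter, mem_univ, true_and] at ha hb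
  by_contra hab
  rcases lt_or_gt_of_ne hab with h | h
  · exact (G.prox_pair hb.1 hb.2 hne).2 a h ha
  · exact (G.prox_pair ha.1 ha.2 hne).2 b h hb

lemma M_apply_eq_neg_one_or_zero {μ ν : Fin G.N} (hne : μ ≠ ν) :
    (G.Pᵀ * G.P) μ ν = -1 ∨ (G.Pᵀ * G.P) μ ν = 0 := by
  rw [G.M_apply_of_ne hne]
  rcases Nat.le_one_iff_eq_zero_or_eq_one.mp (G.card_commonProx_le_one hne) with h | h
  · by_cases h1 : G.prox μ ν
    · simp [h, h1, G.prox_asymm h1]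
    · by_cases h2 : G.prox ν μ <;> simp [h, h1, h2]
  · obtain ⟨ρ, hρ⟩ := card_eq_one.mp h
    have hρ' : G.prox ρ μ ∧ G.prox ρ ν := by simpa using (eq_singleton_iff_unique_mem.mp hρ).1
    rcases (G.prox_pair hρ'.1 hρ'.2 hne).1 with hp | hp <;> simp [h, hp, G.prox_asymm hp]

lemma M_nonpos_of_ne {μ ν : Fin G.N} (hne : μ ≠ ν) : (G.Pᵀ * G.P) μ ν ≤ 0 := by
  rcases G.M_apply_eq_neg_one_or_zero hne with h | h <;> simp [h]

lemma M_eq_zero_of_not_adj {μ ν : Fin G.N} (hne : μ ≠ ν) (hna : ¬ G.adj μ ν) :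
    (G.Pᵀ * G.P) μ ν = 0 :=
  (G.M_apply_eq_neg_one_or_zero hne).resolve_left fun h => hna ⟨hne, h⟩

lemma sum_M_apply (ν : Fin G.N) :
    ∑ μ, (G.Pᵀ * G.P) μ ν = (G.Pᵀ * G.P) ν ν - G.valence ν := by
  have hterm : ∀ μ ∈ univ.erase ν, (G.Pᵀ * G.P) μ ν = if G.adj ν μ then -1 else 0 := by
    intro μ hμ
    have hne := ne_of_mem_erase hμ
    split_ifs with hadj
    · exact G.M_comm μ ν ▸ hadj.2
    · exact G.M_eq_zero_of_not_adj hne fun h => hadj (G.adj_symm h)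
  rw [← add_sum_erase _ _ (mem_univ ν), sum_congr rfl hterm, sum_ite, sum_const_zero,
    sum_const, filter_erase, erase_eq_of_notMem fun h => (mem_filter.mp h).2.1 rfl]
  simp [valence, nbrs, sub_eq_add_neg]

lemma kvec_vecMul_M : G.kvec ᵥ* (G.Pᵀ * G.P) = fun ν => ∑ μ, G.P μ ν := by
  have hk : G.kvec = 1 ᵥ* G.Qᵀ := by
    ext ν
    simp [kvec, Matrix.vecMul, dotProduct]
  have hQM : G.Qᵀ * (G.Pᵀ * G.P) = G.P := by
    rw [← Matrix.mul_assoc, ← Matrix.transpose_mul, Q,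
      Matrix.mul_nonsing_inv G.P (by simp [det_P]), Matrix.transpose_one, Matrix.one_mul]
  rw [hk, Matrix.vecMul_vecMul, hQM]
  ext ν
  simp [Matrix.vecMul, dotProduct]

lemma sum_P_add_mul_self (ν : Fin G.N) : ∑ μ, (G.P μ ν + G.P μ ν * G.P μ ν) = 2 := by
  have hterm : ∀ μ, G.P μ ν + G.P μ ν * G.P μ ν = if μ = ν then 2 else 0 := by
    intro μ
    unfold P
    split_ifs <;> norm_num
  simp [hterm]

lemma kvec_add_one_vecMul_M (ν : Fin G.N) :
    ((G.kvec + 1) ᵥ* (G.Pᵀ * G.P)) ν = 2 - G.valence ν := by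
  have hdiag : (G.Pᵀ * G.P) ν ν = ∑ μ, G.P μ ν * G.P μ ν := by simp [Matrix.mul_apply]
  have hone : (1 ᵥ* (G.Pᵀ * G.P)) ν = ∑ μ, (G.Pᵀ * G.P) μ ν := by
    simp [Matrix.vecMul, dotProduct]
  rw [Matrix.add_vecMul, Pi.add_apply, kvec_vecMul_M, hone, sum_M_apply, hdiag,
    ← G.sum_P_add_mul_self ν, sum_add_distrib]
  ring

lemma indicator_vecMul_M {S : Set (Fin G.N)} (hS : ∀ μ ν, G.adj μ ν → μ ∈ S → ν ∈ S)
    (x : Fin G.N → ℚ) :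
    S.indicator x ᵥ* (G.Pᵀ * G.P) = S.indicator (x ᵥ* (G.Pᵀ * G.P)) := by
  have hcut : ∀ {ρ η}, ρ ∈ S → η ∉ S → (G.Pᵀ * G.P) ρ η = 0 := fun hρ hη =>
    G.M_eq_zero_of_not_adj (fun h => hη (h ▸ hρ)) fun h => hη (hS _ _ h hρ)
  ext η
  simp only [Matrix.vecMul, dotProduct]
  by_cases hη : η ∈ S
  · rw [Set.indicator_of_mem hη]
    refine sum_congr rfl fun ρ _ => ?_
    by_cases hρ : ρ ∈ S
    · simp [hρ]
    · simp [hρ, G.M_comm, hcut hη hρ]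
  · rw [Set.indicator_of_notMem hη]
    refine sum_eq_zero fun ρ _ => ?_
    by_cases hρ : ρ ∈ S
    · simp [hcut hρ hη]
    · simp [hρ]

lemma exists_dh_pos_of_adj_closed {dh : Fin G.N → ℕ} (hdh : dh ≠ 0) {S : Set (Fin G.N)}
    (hS : ∀ μ ν, G.adj μ ν → μ ∈ S → ν ∈ S) (hne : S.Nonempty) : ∃ η ∈ S, 0 < dh η := by
  by_contra! h
  have hzero : S.indicator (G.dval dh) ᵥ* (G.Pᵀ * G.P) = 0 := by
    rw [G.indicator_vecMul_M hS, dval_vecMul_M]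
    ext η
    by_cases hη : η ∈ S
    · simpa [hη] using h η hη
    · simp [hη]
  have hind : S.indicator (G.dval dh) = 0 := by
    rw [← Matrix.vecMul_one (S.indicator _), ← Matrix.mul_nonsing_inv _ G.isUnit_det_M,
      ← Matrix.vecMul_vecMul, hzero, Matrix.zero_vecMul]
  obtain ⟨η, hη⟩ := hne
  have := congrFun hind η
  rw [Set.indicator_of_mem hη] at this
  exact (G.dval_pos hdh η).ne' this

lemma eq_zero_of_adj_of_vecMul_M_nonneg {g : Fin G.N → ℚ} (hg : 0 ≤ g) {η μ : Fin G.N}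
    (hη : g η = 0) (hgη : 0 ≤ (g ᵥ* (G.Pᵀ * G.P)) η) (hadj : G.adj η μ) : g μ = 0 := by
  have hterm : ∀ ρ ∈ univ, g ρ * (G.Pᵀ * G.P) ρ η ≤ 0 := by
    intro ρ _
    rcases eq_or_ne ρ η with rfl | hne
    · simp [hη]
    · exact mul_nonpos_of_nonneg_of_nonpos (hg ρ) (G.M_nonpos_of_ne hne)
  have hsum : ∑ ρ, g ρ * (G.Pᵀ * G.P) ρ η = 0 := le_antisymm (sum_nonpos hterm) hgη
  have hμ := (sum_eq_zero_iff_of_nonpos hterm).mp hsum μ (mem_univ μ)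
  rw [G.M_comm, hadj.2] at hμ
  simpa using hμ

lemma lamA_eq_of_adj {dh : Fin G.N → ℕ} (hdh : dh ≠ 0) {f : Fin G.N → ℚ} (hf : G.Antinef f)
    {ξ : ℚ} (hξ : ∀ ρ, ξ ≤ G.lamA dh (f ρ) ρ) {η μ : Fin G.N} (hη : G.lamA dh (f η) η = ξ)
    (hval : G.valence η ≤ 2) (hdhη : dh η = 0) (hadj : G.adj η μ) :
    G.lamA dh (f μ) μ = ξ := by
  set g := f + G.kvec + 1 - ξ • G.dval dh with hg
  have hlam : ∀ ρ, G.lamA dh (f ρ) ρ = ξ ↔ g ρ = 0 := by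
    intro ρ
    rw [lamA, div_eq_iff (G.dval_pos hdh ρ).ne']
    simp [hg, sub_eq_zero]
  have hg0 : 0 ≤ g := fun ρ => by
    have := hξ ρ
    rw [lamA, le_div_iff₀ (G.dval_pos hdh ρ)] at this
    simp only [hg, Pi.sub_apply, Pi.add_apply, Pi.one_apply, Pi.smul_apply, smul_eq_mul,
      Pi.zero_apply]
    linarith
  have hĝ : (g ᵥ* (G.Pᵀ * G.P)) η = (f ᵥ* (G.Pᵀ * G.P)) η + 2 - G.valence η - ξ * dh η := by
    rw [hg, Matrix.sub_vecMul, add_assoc, Matrix.add_vecMul, Matrix.smul_vecMul, dval_vecMul_M]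
    simp only [Pi.sub_apply, Pi.add_apply, Pi.smul_apply, smul_eq_mul, kvec_add_one_vecMul_M]
    ring
  have hĝη : 0 ≤ (g ᵥ* (G.Pᵀ * G.P)) η := by
    have hval' : (G.valence η : ℚ) ≤ 2 := by exact_mod_cast hval
    rw [hĝ, hdhη, Nat.cast_zero, mul_zero]
    linarith [hf η]
  exact (hlam μ).mpr (G.eq_zero_of_adj_of_vecMul_M_nonneg hg0 ((hlam η).mp hη) hĝη hadj)

end DualGraph

/-- The support of a jumping number contains a vertex which is either a star
or corresponds to a simple factor of the ideal. -/
theorem stmt3 (G : DualGraph) (dh : Fin G.N → ℕ) (hdh : dh ≠ 0)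
    (f : Fin G.N → ℤ) (hf : G.Antinef (fun i => (f i : ℚ))) :
    ∃ ν, (∀ η, G.lamA dh (f ν : ℚ) ν ≤ G.lamA dh (f η : ℚ) η) ∧
      (3 ≤ G.valence ν ∨ 0 < dh ν) := by
  obtain ⟨ν₀, -, hν₀⟩ := Finset.univ.exists_min_image (fun η => G.lamA dh (f η : ℚ) η)
    ⟨G.root, Finset.mem_univ _⟩
  set ξ := G.lamA dh (f ν₀ : ℚ) ν₀
  have hmin : ∀ η, ξ ≤ G.lamA dh (f η : ℚ) η := fun η => hν₀ η (Finset.mem_univ η)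
  by_contra! hnone
  set S : Set (Fin G.N) := {η | G.lamA dh (f η : ℚ) η = ξ}
  have hS_small : ∀ η ∈ S, G.valence η ≤ 2 ∧ dh η = 0 := fun η hη => by
    have := hnone η fun ρ => (show G.lamA dh (f η : ℚ) η = ξ from hη) ▸ hmin ρ
    omega
  have hS : ∀ η μ, G.adj η μ → η ∈ S → μ ∈ S := fun η μ hadj hη =>
    G.lamA_eq_of_adj hdh hf hmin hη (hS_small η hη).1 (hS_small η hη).2 hadj
  obtain ⟨η, hηS, hη⟩ := G.exists_dh_pos_of_adj_closed hdh hS ⟨ν₀, rfl⟩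
  exact hη.ne' (hS_small η hηS).2
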